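/- arXiv:2506.08150 — 4 statements merged into one kernel-verified Lean document; each statement's English description precedes it below -/
import Mathlib

section
/- Completeness of the constraint translation: if M = (⟨T,T⟩, τ) is a metric equilibrium model of a metric logic program P of length λ, then θ^c(M) is a constraint equilibrium model of Π_λ(P) ∪ Δ^c_λ ∪ Ψ^c_λ(P). -/
/-! ### Propositional Here-and-There -/

inductive HTForm (α : Type) : Type
  | bot : HTForm α
  | atom : α → HTForm α
  | and : HTForm α → HTForm α → HTForm α
  | or : HTForm α → HTForm α → HTForm α
  | imp : HTForm α → HTForm α → HTForm α

/-- HT satisfaction `⟨H,T⟩ ⊨ φ`. -/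
def HTSat {α : Type} : Set α → Set α → HTForm α → Prop
  | _, _, .bot => False
  | H, _, .atom a => a ∈ H
  | H, T, .and φ ψ => HTSat H T φ ∧ HTSat H T ψ
  | H, T, .or φ ψ => HTSat H T φ ∨ HTSat H T ψ
  | H, T, .imp φ ψ => (HTSat H T φ → HTSat H T ψ) ∧ (HTSat T T φ → HTSat T T ψ)

/-- Classical satisfaction. -/
def ClSat {α : Type} : Set α → HTForm α → Prop
  | _, .bot => False
  | T, .atom a => a ∈ T
  | T, .and φ ψ => ClSat T φ ∧ ClSat T ψ
  | T, .or φ ψ => ClSat T φ ∨ ClSat T ψ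
  | T, .imp φ ψ => ClSat T φ → ClSat T ψ

def HTModel {α : Type} (H T : Set α) (Γ : Set (HTForm α)) : Prop :=
  ∀ φ ∈ Γ, HTSat H T φ

/-- Equilibrium model: total HT-model minimal in the here-component. -/
def EqModel {α : Type} (T : Set α) (Γ : Set (HTForm α)) : Prop :=
  HTModel T T Γ ∧ ∀ H : Set α, H ⊆ T → HTModel H T Γ → H = T

def hneg {α : Type} (φ : HTForm α) : HTForm α := .imp φ .bot
def hTop {α : Type} : HTForm α := hneg .bot
def hconj {α : Type} (l : List (HTForm α)) : HTForm α := l.foldr .and hTop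
def hdisj {α : Type} (l : List (HTForm α)) : HTForm α := l.foldr .or .bot

/-! ### Timing functions -/

/-- A (strict) timing function wrt `lam`: `τ 0 = 0` and `τ` strictly increasing on `[0, lam)`. -/
def TimingFn (lam : ℕ) (τ : ℕ → ℕ) : Prop :=
  τ 0 = 0 ∧ ∀ k, k + 1 < lam → τ k < τ (k + 1)

/-! ### Metric formulas and MHT satisfaction -/

inductive MForm (α : Type) : Type
  | bot : MForm α
  | atom : α → MForm α
  | and : MForm α → MForm α → MForm α
  | or : MForm α → MForm α → MForm α
  | imp : MForm α → MForm α → MForm α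
  | init : MForm α
  | next : ℕ → Option ℕ → MForm α → MForm α
  | always : ℕ → Option ℕ → MForm α → MForm α
  | event : ℕ → Option ℕ → MForm α → MForm α

/-- Membership `d ∈ [m, n)` with `n ∈ ℕ ∪ {ω}` (`none` = ω). -/
def inI (m : ℕ) (n : Option ℕ) (d : ℕ) : Prop :=
  m ≤ d ∧ ∀ n', n = some n' → d < n'

/-- MHT satisfaction over a timed HT-trace of length `lam` given by `H T : ℕ → Set α` and `τ`. -/
def MSat {α : Type} (lam : ℕ) : (ℕ → Set α) → (ℕ → Set α) → (ℕ → ℕ) → ℕ → MForm α → Prop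
  | _, _, _, _, .bot => False
  | H, _, _, k, .atom a => a ∈ H k
  | H, T, τ, k, .and φ ψ => MSat lam H T τ k φ ∧ MSat lam H T τ k ψ
  | H, T, τ, k, .or φ ψ => MSat lam H T τ k φ ∨ MSat lam H T τ k ψ
  | H, T, τ, k, .imp φ ψ =>
      (MSat lam H T τ k φ → MSat lam H T τ k ψ) ∧
      (MSat lam T T τ k φ → MSat lam T T τ k ψ)
  | _, _, _, k, .init => k = 0
  | H, T, τ, k, .next m n φ =>
      k + 1 < lam ∧ MSat lam H T τ (k + 1) φ ∧ inI m n (τ (k + 1) - τ k)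
  | H, T, τ, k, .event m n φ =>
      ∃ i, k ≤ i ∧ i < lam ∧ inI m n (τ i - τ k) ∧ MSat lam H T τ i φ
  | H, T, τ, k, .always m n φ =>
      ∀ i, k ≤ i → i < lam → inI m n (τ i - τ k) → MSat lam H T τ i φ

def mneg {α : Type} (φ : MForm α) : MForm α := .imp φ .bot
def mTop {α : Type} : MForm α := mneg .bot
def mconj {α : Type} (l : List (MForm α)) : MForm α := l.foldr .and mTop
def mdisj {α : Type} (l : List (MForm α)) : MForm α := l.foldr .or .bot

/-! ### The Boolean timing program Δ_{λ,ν} -/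

/-- `bigOr`/`deltaRule`/`DeltaB` over atoms embedded via `f : ℕ × ℕ → β`
(`f (k,d)` plays the role of the atom `t_{k,d}`). -/
def deltaRule {β : Type} (f : ℕ × ℕ → β) (k d ν : ℕ) : HTForm β :=
  .imp (.atom (f (k, d)))
    (hdisj (((List.range (ν + 1)).filter (fun d' => decide (d < d'))).map
      (fun d' => .atom (f (k + 1, d')))))

def DeltaB {β : Type} (f : ℕ × ℕ → β) (lam ν : ℕ) : Set (HTForm β) :=
  {HTForm.atom (f (0, 0))} ∪
  {r | ∃ k d, k + 1 < lam ∧ d ≤ ν ∧ r = deltaRule f k d ν}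

/-- `⟨H,T⟩` is timed wrt `lam` with timing function `τ`:
`t_{k,d} ∈ H ↔ τ k = d` and `t_{k,d} ∈ T ↔ τ k = d` for all `k < lam`. -/
def TimedHT {β : Type} (f : ℕ × ℕ → β) (lam : ℕ) (H T : Set β) (τ : ℕ → ℕ) : Prop :=
  TimingFn lam τ ∧
  ∀ k, k < lam → ∀ d, ((f (k, d) ∈ H) ↔ τ k = d) ∧ ((f (k, d) ∈ T) ↔ τ k = d)

/-! ### HT_c with difference constraints (simple signature) -/

abbrev CVal (V : Type) := V → Option ℕ

def CValLe {V : Type} (h t : CVal V) : Prop := ∀ x d, h x = some d → t x = some d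

inductive CForm (V : Type) : Type
  | bot : CForm V
  | eqC : V → ℕ → CForm V
  | diff : V → V → ℤ → CForm V
  | and : CForm V → CForm V → CForm V
  | or : CForm V → CForm V → CForm V
  | imp : CForm V → CForm V → CForm V

def CSat {V : Type} : CVal V → CVal V → CForm V → Prop
  | _, _, .bot => False
  | h, _, .eqC x d => h x = some d
  | h, _, .diff x y d => ∃ a b : ℕ, h x = some a ∧ h y = some b ∧ (a : ℤ) - b ≤ d
  | h, t, .and φ ψ => CSat h t φ ∧ CSat h t ψ
  | h, t, .or φ ψ => CSat h t φ ∨ CSat h t ψ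
  | h, t, .imp φ ψ => (CSat h t φ → CSat h t ψ) ∧ (CSat t t φ → CSat t t ψ)

def CModel {V : Type} (h t : CVal V) (Γ : Set (CForm V)) : Prop := ∀ φ ∈ Γ, CSat h t φ

/-- Δ^c_λ over integer variables `t_0, …, t_{λ-1}` (variables are indices in ℕ). -/
def DeltaC (lam : ℕ) : Set (CForm ℕ) :=
  {CForm.eqC 0 0} ∪ {r | ∃ k, k + 1 < lam ∧ r = CForm.diff k (k + 1) (-1)}

/-- `⟨h,t⟩` is timed wrt `lam`. -/
def TimedC (lam : ℕ) (h t : CVal ℕ) : Prop :=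
  ∃ τ : ℕ → ℕ, TimingFn lam τ ∧ ∀ k, k < lam → h k = some (τ k) ∧ t k = some (τ k)

/-! ### Timed traces and the bijection θ/σ -/

abbrev TAtom (α : Type) := (α × ℕ) ⊕ (ℕ × ℕ)

/-- A trace candidate: here-states, there-states and a timing function. -/
abbrev TraceC (α : Type) := (ℕ → Set α) × (ℕ → Set α) × (ℕ → ℕ)

/-- Timed HT-trace of length `lam` (normalized beyond `lam`). -/
def IsTTrace {α : Type} (lam : ℕ) (M : TraceC α) : Prop :=
  (∀ k, M.1 k ⊆ M.2.1 k) ∧ TimingFn lam M.2.2 ∧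
  (∀ k, lam ≤ k → M.1 k = ∅ ∧ M.2.1 k = ∅ ∧ M.2.2 k = 0)

def thetaMap {α : Type} (lam : ℕ) (M : TraceC α) : Set (TAtom α) × Set (TAtom α) :=
  ({x | (∃ a k, k < lam ∧ a ∈ M.1 k ∧ x = Sum.inl (a, k)) ∨
        (∃ k, k < lam ∧ x = Sum.inr (k, M.2.2 k))},
   {x | (∃ a k, k < lam ∧ a ∈ M.2.1 k ∧ x = Sum.inl (a, k)) ∨
        (∃ k, k < lam ∧ x = Sum.inr (k, M.2.2 k))})

/-- HT-interpretations over `A* ∪ T` timed wrt `lam`. -/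
def TimedInterp (α : Type) (lam : ℕ) : Set (Set (TAtom α) × Set (TAtom α)) :=
  {p | p.1 ⊆ p.2 ∧ (∀ a k, Sum.inl (a, k) ∈ p.2 → k < lam) ∧
    ∃ τ : ℕ → ℕ, TimingFn lam τ ∧
      ∀ k d, (Sum.inr (k, d) ∈ p.1 ↔ (k < lam ∧ τ k = d)) ∧
             (Sum.inr (k, d) ∈ p.2 ↔ (k < lam ∧ τ k = d))}

def sigmaMap {α : Type} (lam : ℕ) (p : Set (TAtom α) × Set (TAtom α)) (τ : ℕ → ℕ) :
    TraceC α :=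
  (fun k => {a | Sum.inl (a, k) ∈ p.1},
   fun k => {a | Sum.inl (a, k) ∈ p.2},
   fun k => if k < lam then τ k else 0)

/-! ### Metric logic programs and the translation Π_λ -/

inductive BAtom (α : Type) : Type
  | atom : α → BAtom α
  | initB : BAtom α
  | finB : BAtom α

/-- A metric rule: either `□(α ← β)` or `□(○_[m,n) a ← β)`. -/
inductive MRule (α : Type) : Type
  | std : List α → List α → List (BAtom α) → List (BAtom α) → MRule α
  | nxt : ℕ → Option ℕ → α → List (BAtom α) → List (BAtom α) → MRule α

def bToM {α : Type} : BAtom α → MForm α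
  | .atom a => .atom a
  | .initB => .init
  | .finB => mneg (.next 0 none mTop)

/-- The rule body as a metric formula. -/
def MRule.mbody {α : Type} : MRule α → MForm α
  | .std _ _ bp bn =>
      .and (mconj (bp.map bToM)) (mconj (bn.map (fun b => mneg (bToM b))))
  | .nxt _ _ _ bp bn =>
      .and (mconj (bp.map bToM)) (mconj (bn.map (fun b => mneg (bToM b))))

/-- The rule (without the leading `□`) as a metric formula. -/
def MRule.toMForm {α : Type} : MRule α → MForm α
  | .std hp hn bp bn =>
      .imp (MRule.mbody (.std hp hn bp bn))
        (mdisj (hp.map MForm.atom ++ hn.map (fun a => mneg (MForm.atom a))))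
  | .nxt m n a bp bn =>
      .imp (MRule.mbody (.nxt m n a bp bn)) (.next m n (.atom a))

/-- `(H,T,τ)` is an MHT-model (of length `lam`) of program `P`. -/
def MHTModelP {α : Type} (lam : ℕ) (H T : ℕ → Set α) (τ : ℕ → ℕ)
    (P : Set (MRule α)) : Prop :=
  ∀ r ∈ P, ∀ k, k < lam → MSat lam H T τ k r.toMForm

/-- Metric equilibrium model `(⟨T,T⟩, τ)` of `P`. -/
def MetricEq {α : Type} (lam : ℕ) (T : ℕ → Set α) (τ : ℕ → ℕ)
    (P : Set (MRule α)) : Prop :=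
  MHTModelP lam T T τ P ∧
  ∀ H : ℕ → Set α, (∀ k, H k ⊆ T k) → MHTModelP lam H T τ P → ∀ k, k < lam → H k = T k

/-- Translation of body atoms at step `k`, with atoms embedded via `g : α × ℕ → β`. -/
def trB {α β : Type} (g : α × ℕ → β) (lam k : ℕ) : BAtom α → HTForm β
  | .atom a => .atom (g (a, k))
  | .initB => if k = 0 then hTop else .bot
  | .finB => if k = lam - 1 then hTop else .bot

def trBody {α β : Type} (g : α × ℕ → β) (lam k : ℕ) : MRule α → HTForm β
  | .std _ _ bp bn =>
      .and (hconj (bp.map (trB g lam k)))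
           (hconj (bn.map (fun b => hneg (trB g lam k b))))
  | .nxt _ _ _ bp bn =>
      .and (hconj (bp.map (trB g lam k)))
           (hconj (bn.map (fun b => hneg (trB g lam k b))))

/-- Translation `t_k(r)` of a metric rule at step `k`. -/
def trRule {α β : Type} (g : α × ℕ → β) (lam k : ℕ) : MRule α → HTForm β
  | .std hp hn bp bn =>
      .imp (trBody g lam k (.std hp hn bp bn))
        (hdisj (hp.map (fun a => HTForm.atom (g (a, k))) ++
                hn.map (fun a => hneg (HTForm.atom (g (a, k))))))
  | .nxt m n a bp bn =>
      .imp (trBody g lam k (.nxt m n a bp bn))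
        (if k = lam - 1 then .bot else .atom (g (a, k + 1)))

/-- `Π_λ(P)`. -/
def PiT {α β : Type} (g : α × ℕ → β) (lam : ℕ) (P : Set (MRule α)) : Set (HTForm β) :=
  {φ | ∃ r ∈ P, ∃ k, k < lam ∧ φ = trRule g lam k r}

/-! ### The Boolean constraint part Ψ_{λ,ν}(P) -/

def PsiB {α : Type} (lam ν : ℕ) (P : Set (MRule α)) : Set (HTForm (TAtom α)) :=
  {φ | ∃ m n a bp bn, MRule.nxt m n a bp bn ∈ P ∧
    ∃ k d d', k + 1 < lam ∧ d < d' ∧ d' ≤ ν ∧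
      φ = .imp (.and (trBody Sum.inl lam k (.nxt m n a bp bn))
                 (.and (.atom (Sum.inr (k, d))) (.atom (Sum.inr (k + 1, d'))))) .bot ∧
      (d' - d < m ∨ ∃ n', n = some n' ∧ n' ≤ d' - d)}

/-- θ on total timed traces, producing one set over `A* ∪ T`. -/
def thetaTot {α : Type} (lam : ℕ) (T : ℕ → Set α) (τ : ℕ → ℕ) : Set (TAtom α) :=
  {x | (∃ a k, k < lam ∧ a ∈ T k ∧ x = Sum.inl (a, k)) ∨
       (∃ k, k < lam ∧ x = Sum.inr (k, τ k))}

/-! ### HT_c over the mixed signature (Boolean atoms + integer timing variables) -/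

inductive CForm2 (α : Type) : Type
  | bot : CForm2 α
  | batom : α × ℕ → CForm2 α
  | eqC : ℕ → ℕ → CForm2 α
  | diff : ℕ → ℕ → ℤ → CForm2 α
  | and : CForm2 α → CForm2 α → CForm2 α
  | or : CForm2 α → CForm2 α → CForm2 α
  | imp : CForm2 α → CForm2 α → CForm2 α

/-- A valuation: Boolean part (atoms assigned `true`) and integer part. -/
abbrev CVal2 (α : Type) := Set (α × ℕ) × (ℕ → Option ℕ)

def CVal2Le {α : Type} (h t : CVal2 α) : Prop :=
  h.1 ⊆ t.1 ∧ ∀ x d, h.2 x = some d → t.2 x = some d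

def CSat2 {α : Type} : CVal2 α → CVal2 α → CForm2 α → Prop
  | _, _, .bot => False
  | h, _, .batom p => p ∈ h.1
  | h, _, .eqC x d => h.2 x = some d
  | h, _, .diff x y d => ∃ a b : ℕ, h.2 x = some a ∧ h.2 y = some b ∧ (a : ℤ) - b ≤ d
  | h, t, .and φ ψ => CSat2 h t φ ∧ CSat2 h t ψ
  | h, t, .or φ ψ => CSat2 h t φ ∨ CSat2 h t ψ
  | h, t, .imp φ ψ => (CSat2 h t φ → CSat2 h t ψ) ∧ (CSat2 t t φ → CSat2 t t ψ)

def CModel2 {α : Type} (h t : CVal2 α) (Γ : Set (CForm2 α)) : Prop :=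
  ∀ φ ∈ Γ, CSat2 h t φ

/-- Constraint equilibrium model. -/
def CEqModel {α : Type} (t : CVal2 α) (Γ : Set (CForm2 α)) : Prop :=
  CModel2 t t Γ ∧ ∀ h : CVal2 α, CVal2Le h t → CModel2 h t Γ → h = t

def cneg {α : Type} (φ : CForm2 α) : CForm2 α := .imp φ .bot

/-- Conversion of Boolean HT formulas over `α × ℕ` into mixed constraint formulas. -/
def toC2 {α : Type} : HTForm (α × ℕ) → CForm2 α
  | .bot => .bot
  | .atom p => .batom p
  | .and φ ψ => .and (toC2 φ) (toC2 ψ)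
  | .or φ ψ => .or (toC2 φ) (toC2 ψ)
  | .imp φ ψ => .imp (toC2 φ) (toC2 ψ)

def PiC {α : Type} (lam : ℕ) (P : Set (MRule α)) : Set (CForm2 α) :=
  toC2 '' PiT id lam P

def DeltaC2 {α : Type} (lam : ℕ) : Set (CForm2 α) :=
  {CForm2.eqC 0 0} ∪ {r | ∃ k, k + 1 < lam ∧ r = CForm2.diff k (k + 1) (-1)}

def PsiC {α : Type} (lam : ℕ) (P : Set (MRule α)) : Set (CForm2 α) :=
  {φ | ∃ m n a bp bn, MRule.nxt m n a bp bn ∈ P ∧ ∃ k, k + 1 < lam ∧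
    (φ = .imp (.and (toC2 (trBody id lam k (.nxt m n a bp bn)))
               (cneg (.diff k (k + 1) (-(m : ℤ))))) .bot ∨
     ∃ n', n = some n' ∧
       φ = .imp (.and (toC2 (trBody id lam k (.nxt m n a bp bn)))
                 (cneg (.diff (k + 1) k ((n' : ℤ) - 1)))) .bot)}

/-- θ^c on total timed traces. -/
def thetaC {α : Type} (lam : ℕ) (T : ℕ → Set α) (τ : ℕ → ℕ) : CVal2 α :=
  ({p | p.2 < lam ∧ p.1 ∈ T p.2}, fun k => if k < lam then some (τ k) else none)

/-!
Read a set of step-indexed atoms as a trace. A Boolean HT-interpretation then satisfies `Π_λ(P)`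
exactly when the trace is an MHT-model of `P`, up to the interval conditions of the next-rules;
these involve only the there-trace and `τ`, and in `θ^c(M)` they are precisely the constraints
`Ψ^c_λ(P)`. Any smaller model `⟨h, θ^c(M)⟩` of the translation agrees with `θ^c(M)` on the timing
variables, since `Δ^c_λ` forces all of them to be defined, so its Boolean part is a smaller
MHT-model of `P`, and metric equilibrium forces it to be all of `θ^c(M)`.
-/

theorem HTSat.there {β : Type} {h t : Set β} (hht : h ⊆ t) :
    ∀ {φ : HTForm β}, HTSat h t φ → HTSat t t φ
  | .bot, hφ => hφ
  | .atom _, hφ => hht hφ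
  | .and _ _, hφ => ⟨HTSat.there hht hφ.1, HTSat.there hht hφ.2⟩
  | .or _ _, hφ => hφ.imp (HTSat.there hht) (HTSat.there hht)
  | .imp _ _, hφ => ⟨hφ.2, hφ.2⟩

theorem HTSat_hconj {β : Type} {h t : Set β} (l : List (HTForm β)) :
    HTSat h t (hconj l) ↔ ∀ φ ∈ l, HTSat h t φ := by
  induction l with
  | nil => simp [hconj, hTop, hneg, HTSat]
  | cons φ l ih => simp [hconj, HTSat, ← ih]

theorem HTSat_hdisj {β : Type} {h t : Set β} (l : List (HTForm β)) :
    HTSat h t (hdisj l) ↔ ∃ φ ∈ l, HTSat h t φ := by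
  induction l with
  | nil => simp [hdisj, HTSat]
  | cons φ l ih => simp [hdisj, HTSat, ← ih]

theorem MSat_mconj {α : Type} {lam k : ℕ} {H T : ℕ → Set α} {τ : ℕ → ℕ}
    (l : List (MForm α)) : MSat lam H T τ k (mconj l) ↔ ∀ φ ∈ l, MSat lam H T τ k φ := by
  induction l with
  | nil => simp [mconj, mTop, mneg, MSat]
  | cons φ l ih => simp [mconj, MSat, ← ih]

theorem MSat_mdisj {α : Type} {lam k : ℕ} {H T : ℕ → Set α} {τ : ℕ → ℕ}
    (l : List (MForm α)) : MSat lam H T τ k (mdisj l) ↔ ∃ φ ∈ l, MSat lam H T τ k φ := by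
  induction l with
  | nil => simp [mdisj, MSat]
  | cons φ l ih => simp [mdisj, MSat, ← ih]

def AgreesBelow {α β : Type} (g : α × ℕ → β) (lam : ℕ) (h : Set β) (H : ℕ → Set α) : Prop :=
  ∀ k, k < lam → ∀ a, g (a, k) ∈ h ↔ a ∈ H k

/-- The interval conditions of the next-rules of `P`: `Π_λ(P)` drops them, `Ψ^c_λ(P)` restores
them as difference constraints. -/
def NextIntervalsHold {α : Type} (lam : ℕ) (T : ℕ → Set α) (τ : ℕ → ℕ) (P : Set (MRule α)) :
    Prop :=
  ∀ m n a bp bn, MRule.nxt m n a bp bn ∈ P → ∀ k, k + 1 < lam →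
    MSat lam T T τ k (MRule.nxt m n a bp bn).mbody → inI m n (τ (k + 1) - τ k)

section Translation

variable {α β : Type} {g : α × ℕ → β} {lam k : ℕ} {h t : Set β} {H T : ℕ → Set α}
  {τ : ℕ → ℕ}

theorem HTSat_trB_iff (hH : AgreesBelow g lam h H) (hk : k < lam) (b : BAtom α) :
    HTSat h t (trB g lam k b) ↔ MSat lam H T τ k (bToM b) := by
  cases b with
  | atom a => exact hH k hk a
  | initB => by_cases h0 : k = 0 <;> simp [trB, bToM, HTSat, MSat, h0, hTop, hneg]
  | finB =>
    by_cases hf : k = lam - 1 <;>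
      simp [trB, bToM, HTSat, MSat, hf, hTop, hneg, mneg, mTop, inI] <;> omega

theorem HTSat_trBody_iff (hH : AgreesBelow g lam h H) (hT : AgreesBelow g lam t T)
    (hk : k < lam) (r : MRule α) :
    HTSat h t (trBody g lam k r) ↔ MSat lam H T τ k r.mbody := by
  cases r <;>
    simp only [trBody, MRule.mbody, HTSat, MSat, hneg, mneg, HTSat_hconj, MSat_mconj,
      List.forall_mem_map, HTSat_trB_iff (t := t) (T := T) (τ := τ) hH hk,
      HTSat_trB_iff (t := t) (T := T) (τ := τ) hT hk]

theorem HTSat_trRule_std_iff (hH : AgreesBelow g lam h H) (hT : AgreesBelow g lam t T)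
    (hk : k < lam) (hp hn : List α) (bp bn : List (BAtom α)) :
    HTSat h t (trRule g lam k (.std hp hn bp bn)) ↔
      MSat lam H T τ k (MRule.std hp hn bp bn).toMForm := by
  simp only [trRule, MRule.toMForm, HTSat, MSat, HTSat_trBody_iff (τ := τ) hH hT hk,
    HTSat_trBody_iff (τ := τ) hT hT hk, HTSat_hdisj, MSat_mdisj, List.mem_append, List.mem_map,
    or_and_right, exists_or, exists_exists_and_eq_and, hneg, mneg, hH k hk, hT k hk]

theorem HTSat_nextHead_iff {s : Set β} {S : ℕ → Set α} (hS : AgreesBelow g lam s S)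
    (hk : k < lam) (a : α) :
    HTSat s t (if k = lam - 1 then .bot else .atom (g (a, k + 1))) ↔
      k + 1 < lam ∧ a ∈ S (k + 1) := by
  split_ifs with hlast
  · simp only [HTSat, false_iff, not_and]
    omega
  · have hk1 : k + 1 < lam := by omega
    simp only [HTSat, hS (k + 1) hk1, hk1, true_and]

theorem MSat_toMForm_nxt_iff (hht : h ⊆ t) (hH : AgreesBelow g lam h H)
    (hT : AgreesBelow g lam t T) (hk : k < lam) (m : ℕ) (n : Option ℕ) (a : α)
    (bp bn : List (BAtom α)) :
    MSat lam H T τ k (MRule.nxt m n a bp bn).toMForm ↔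
      HTSat h t (trRule g lam k (.nxt m n a bp bn)) ∧
        (k + 1 < lam → MSat lam T T τ k (MRule.nxt m n a bp bn).mbody →
          inI m n (τ (k + 1) - τ k)) := by
  have hB := HTSat_trBody_iff (τ := τ) hH hT hk (.nxt m n a bp bn)
  have hBt := HTSat_trBody_iff (τ := τ) hT hT hk (.nxt m n a bp bn)
  have persist : MSat lam H T τ k (MRule.nxt m n a bp bn).mbody →
      MSat lam T T τ k (MRule.nxt m n a bp bn).mbody :=
    fun hb => hBt.1 ((hB.2 hb).there hht)
  simp only [MRule.toMForm, trRule, MSat, HTSat, hB, hBt, HTSat_nextHead_iff hH hk,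
    HTSat_nextHead_iff hT hk]
  tauto

theorem MHTModelP_iff {P : Set (MRule α)} (hht : h ⊆ t) (hH : AgreesBelow g lam h H)
    (hT : AgreesBelow g lam t T) :
    MHTModelP lam H T τ P ↔ HTModel h t (PiT g lam P) ∧ NextIntervalsHold lam T τ P := by
  constructor
  · intro hM
    refine ⟨?_, fun m n a bp bn hr k hk1 =>
      ((MSat_toMForm_nxt_iff hht hH hT (by omega) ..).1 (hM _ hr k (by omega))).2 hk1⟩
    rintro _ ⟨r, hr, k, hk, rfl⟩
    cases r with
    | std => exact (HTSat_trRule_std_iff hH hT hk ..).2 (hM _ hr k hk)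
    | nxt => exact ((MSat_toMForm_nxt_iff hht hH hT hk ..).1 (hM _ hr k hk)).1
  · rintro ⟨hPi, hint⟩ r hr k hk
    have hrk := hPi _ ⟨r, hr, k, hk, rfl⟩
    cases r with
    | std => exact (HTSat_trRule_std_iff hH hT hk ..).1 hrk
    | nxt => exact (MSat_toMForm_nxt_iff hht hH hT hk ..).2 ⟨hrk, hint _ _ _ _ _ hr k⟩

end Translation

theorem CSat2_toC2_iff {α : Type} (h t : CVal2 α) (φ : HTForm (α × ℕ)) :
    CSat2 h t (toC2 φ) ↔ HTSat h.1 t.1 φ := by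
  induction φ generalizing h t with
  | bot | atom => exact Iff.rfl
  | and _ _ ih₁ ih₂ => exact and_congr (ih₁ h t) (ih₂ h t)
  | or _ _ ih₁ ih₂ => exact or_congr (ih₁ h t) (ih₂ h t)
  | imp _ _ ih₁ ih₂ =>
    exact and_congr (imp_congr (ih₁ h t) (ih₂ h t)) (imp_congr (ih₁ t t) (ih₂ t t))

theorem CModel2_image_toC2_iff {α : Type} {h t : CVal2 α} {Γ : Set (HTForm (α × ℕ))} :
    CModel2 h t (toC2 '' Γ) ↔ HTModel h.1 t.1 Γ := by
  simp only [CModel2, HTModel, Set.forall_mem_image, CSat2_toC2_iff]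

theorem CSat2_imp_bot_self_iff {α : Type} {s : CVal2 α} {φ : CForm2 α} :
    CSat2 s s (.imp φ .bot) ↔ ¬ CSat2 s s φ :=
  and_self_iff

section ThetaC

variable {α : Type} {lam k : ℕ} {T : ℕ → Set α} {τ : ℕ → ℕ}

theorem thetaC_snd_of_lt (hk : k < lam) : (thetaC lam T τ).2 k = some (τ k) := if_pos hk

theorem agreesBelow_thetaC : AgreesBelow id lam (thetaC lam T τ).1 T :=
  fun _ hk _ => and_iff_right hk

theorem CSat2_thetaC_diff (s : CVal2 α) {x y : ℕ} (hx : x < lam) (hy : y < lam) (d : ℤ) :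
    CSat2 (thetaC lam T τ) s (.diff x y d) ↔ (τ x : ℤ) - τ y ≤ d := by
  simp [CSat2, thetaC_snd_of_lt hx, thetaC_snd_of_lt hy]

theorem thetaC_models_deltaC2 (hlam : 1 ≤ lam) (hτ : TimingFn lam τ) :
    CModel2 (thetaC lam T τ) (thetaC lam T τ) (DeltaC2 lam) := by
  rintro _ ((rfl : _ = CForm2.eqC 0 0) | ⟨k, hk1, rfl⟩)
  · exact (thetaC_snd_of_lt hlam).trans (congrArg some hτ.1)
  · have := hτ.2 k hk1
    rw [CSat2_thetaC_diff _ (by omega) hk1]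
    omega

theorem thetaC_models_psiC {P : Set (MRule α)} (hτ : TimingFn lam τ)
    (hint : NextIntervalsHold lam T τ P) :
    CModel2 (thetaC lam T τ) (thetaC lam T τ) (PsiC lam P) := by
  rintro _ ⟨m, n, a, bp, bn, hr, k, hk1, hφ⟩
  have hk : k < lam := by omega
  have hmono := hτ.2 k hk1
  have hin (hb : CSat2 (thetaC lam T τ) (thetaC lam T τ)
      (toC2 (trBody id lam k (MRule.nxt m n a bp bn)))) : inI m n (τ (k + 1) - τ k) :=
    hint _ _ _ _ _ hr k hk1 <| (HTSat_trBody_iff agreesBelow_thetaC agreesBelow_thetaC hk _).1 <|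
      (CSat2_toC2_iff _ _ _).1 hb
  rcases hφ with rfl | ⟨n', hn, rfl⟩ <;> rw [CSat2_imp_bot_self_iff] <;> rintro ⟨hb, hdiff, -⟩
  · refine hdiff ((CSat2_thetaC_diff _ hk hk1 _).2 ?_)
    have := (hin hb).1
    omega
  · refine hdiff ((CSat2_thetaC_diff _ hk1 hk _).2 ?_)
    have := (hin hb).2 n' hn
    omega

theorem CVal2Le.snd_eq_thetaC {h s : CVal2 α} (hle : CVal2Le h (thetaC lam T τ))
    (hΔ : CModel2 h s (DeltaC2 lam)) : h.2 = (thetaC lam T τ).2 := by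
  funext k
  by_cases hk : k < lam
  · obtain ⟨d, hd⟩ : ∃ d, h.2 k = some d := by
      cases k with
      | zero => exact ⟨0, hΔ _ (Or.inl rfl)⟩
      | succ j =>
        obtain ⟨-, d, -, hd, -⟩ := hΔ _ (Or.inr ⟨j, hk, rfl⟩)
        exact ⟨d, hd⟩
    rw [hd, hle.2 k d hd]
  · have hnone : (thetaC lam T τ).2 k = none := if_neg hk
    rw [hnone, Option.eq_none_iff_forall_ne_some]
    intro d hd
    simpa [hnone] using hle.2 k d hd

theorem CVal2Le.fst_eq_thetaC {h : CVal2 α} (hle : CVal2Le h (thetaC lam T τ))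
    (hslice : ∀ k, k < lam → {a | (a, k) ∈ h.1} = T k) : h.1 = (thetaC lam T τ).1 := by
  refine hle.1.antisymm fun ⟨a, k⟩ ⟨hk, ha⟩ => ?_
  rw [← hslice k hk] at ha
  exact ha

end ThetaC

/-- Theorem 3 (Completeness of the constraint translation). -/
theorem constraint_translation_complete {α : Type} (lam : ℕ) (hlam : 1 ≤ lam)
    (P : Set (MRule α)) (T : ℕ → Set α) (τ : ℕ → ℕ)
    (hτ : TimingFn lam τ) (hme : MetricEq lam T τ P) :
    CEqModel (thetaC lam T τ) (PiC lam P ∪ DeltaC2 lam ∪ PsiC lam P) := by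
  obtain ⟨hmod, hmin⟩ := hme
  have hT : AgreesBelow id lam (thetaC lam T τ).1 T := agreesBelow_thetaC
  obtain ⟨hPi, hint⟩ := (MHTModelP_iff subset_rfl hT hT).1 hmod
  refine ⟨?_, fun h hle hh => ?_⟩
  · rintro φ ((hφ | hφ) | hφ)
    · exact CModel2_image_toC2_iff.2 hPi φ hφ
    · exact thetaC_models_deltaC2 hlam hτ φ hφ
    · exact thetaC_models_psiC hτ hint φ hφ
  · have hH : AgreesBelow id lam h.1 (fun k => {a | (a, k) ∈ h.1}) := fun _ _ _ => Iff.rfl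
    have hPih : HTModel h.1 (thetaC lam T τ).1 (PiT id lam P) :=
      CModel2_image_toC2_iff.1 fun φ hφ => hh φ (Or.inl (Or.inl hφ))
    have hslice := hmin _ (fun k a ha => (hle.1 ha).2)
      ((MHTModelP_iff hle.1 hH hT).2 ⟨hPih, hint⟩)
    exact Prod.ext (hle.fst_eq_thetaC hslice)
      (hle.snd_eq_thetaC fun φ hφ => hh φ (Or.inl (Or.inr hφ)))
end

section
/- Correctness of the constraint translation: if ⟨t,t⟩ is a constraint equilibrium model of Π_λ(P) ∪ Δ^c_λ ∪ Ψ^c_λ(P), then σ^c(⟨t,t⟩) is a metric equilibrium model of P. -/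
/-!
The constraints `Δ^c` force the integer variables `t_0 = 0 < t_1 < ⋯` to be defined below `λ`,
which gives the timing function `τ`. Under `τ`, the Boolean part of a translated rule has the
HT-semantics of the metric rule, except that the interval condition of a next-rule is dropped; in
the total model it is restored by the two denials of `Ψ^c`.

For minimality, a smaller metric here-trace `H`, cut off at `λ` and paired with the integer part
of `t`, gives a smaller HT_c-model: `Π` holds by the rule correspondence, `Δ^c` because the integers
are unchanged, and `Ψ^c` because denials hold at `⟨h,t⟩` as soon as they hold at `⟨t,t⟩`.
Constraint equilibrium then forces this valuation to be `t`.
-/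

section ConstraintTranslation

variable {α : Type}

theorem mSat_mconj {lam k : ℕ} {H T : ℕ → Set α} {τ : ℕ → ℕ} (l : List (MForm α)) :
    MSat lam H T τ k (mconj l) ↔ ∀ φ ∈ l, MSat lam H T τ k φ := by
  induction l with
  | nil => simp [mconj, mTop, mneg, MSat]
  | cons φ l ih => simp [mconj, MSat, ← ih]

theorem mSat_mdisj {lam k : ℕ} {H T : ℕ → Set α} {τ : ℕ → ℕ} (l : List (MForm α)) :
    MSat lam H T τ k (mdisj l) ↔ ∃ φ ∈ l, MSat lam H T τ k φ := by
  induction l with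
  | nil => simp [mdisj, MSat]
  | cons φ l ih => simp [mdisj, MSat, ← ih]

theorem cSat2_toC2_hconj {h t : CVal2 α} (l : List (HTForm (α × ℕ))) :
    CSat2 h t (toC2 (hconj l)) ↔ ∀ φ ∈ l, CSat2 h t (toC2 φ) := by
  induction l with
  | nil => simp [hconj, hTop, hneg, toC2, CSat2]
  | cons φ l ih => simp [hconj, toC2, CSat2, ← ih]

theorem cSat2_toC2_hdisj {h t : CVal2 α} (l : List (HTForm (α × ℕ))) :
    CSat2 h t (toC2 (hdisj l)) ↔ ∃ φ ∈ l, CSat2 h t (toC2 φ) := by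
  induction l with
  | nil => simp [hdisj, toC2, CSat2]
  | cons φ l ih => simp [hdisj, toC2, CSat2, ← ih]

theorem CSat2.mono {h t : CVal2 α} (hle : CVal2Le h t) {φ : CForm2 α} :
    CSat2 h t φ → CSat2 t t φ := by
  induction φ with
  | bot => exact id
  | batom p => exact fun hp => hle.1 hp
  | eqC x d => exact hle.2 x d
  | diff x y d => exact fun ⟨a, b, ha, hb, hab⟩ => ⟨a, b, hle.2 x a ha, hle.2 y b hb, hab⟩
  | and φ ψ ihφ ihψ => exact And.imp ihφ ihψ
  | or φ ψ ihφ ihψ => exact Or.imp ihφ ihψ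
  | imp φ ψ _ _ => exact fun hφψ => ⟨hφψ.2, hφψ.2⟩

theorem CSat2.imp_bot_of_le {h t : CVal2 α} (hle : CVal2Le h t) {φ : CForm2 α}
    (ht : CSat2 t t (.imp φ .bot)) : CSat2 h t (.imp φ .bot) :=
  ⟨fun hφ => ht.1 (hφ.mono hle), ht.2⟩

theorem CSat2.of_denial {t : CVal2 α} {φ ψ : CForm2 α}
    (hden : CSat2 t t (.imp (.and φ (cneg ψ)) .bot)) (hφ : CSat2 t t φ) : CSat2 t t ψ := by
  by_contra hψ
  exact hden.1 ⟨hφ, hψ, hψ⟩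

theorem cSat2_diff_iff {h t : CVal2 α} {x y a b : ℕ} {d : ℤ} (hx : h.2 x = some a)
    (hy : h.2 y = some b) : CSat2 h t (.diff x y d) ↔ (a : ℤ) - b ≤ d := by
  simp [CSat2, hx, hy]

/-- The state sequence `k ↦ {a | a_k = true}` of `σ^c`. -/
def CVal2.trace (v : CVal2 α) : ℕ → Set α := fun k => {a | (a, k) ∈ v.1}

def BAtom.Holds (lam k : ℕ) (X : Set α) : BAtom α → Prop
  | .atom a => a ∈ X
  | .initB => k = 0
  | .finB => lam ≤ k + 1

def MRule.posBody : MRule α → List (BAtom α)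
  | .std _ _ bp _ => bp
  | .nxt _ _ _ bp _ => bp

def MRule.negBody : MRule α → List (BAtom α)
  | .std _ _ _ bn => bn
  | .nxt _ _ _ _ bn => bn

def MRule.BodyHolds (r : MRule α) (lam k : ℕ) (X Y : Set α) : Prop :=
  (∀ b ∈ r.posBody, b.Holds lam k X) ∧ ∀ b ∈ r.negBody, ¬ b.Holds lam k X ∧ ¬ b.Holds lam k Y

theorem mSat_bToM {lam k : ℕ} {H T : ℕ → Set α} {τ : ℕ → ℕ} (b : BAtom α) :
    MSat lam H T τ k (bToM b) ↔ b.Holds lam k (H k) := by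
  cases b <;> simp [bToM, BAtom.Holds, MSat, mneg, mTop, inI]

theorem cSat2_toC2_trB {lam k : ℕ} (hk : k < lam) {h t : CVal2 α} (b : BAtom α) :
    CSat2 h t (toC2 (trB id lam k b)) ↔ b.Holds lam k (h.trace k) := by
  cases b <;> simp only [trB] <;> try split_ifs
  all_goals simp [BAtom.Holds, CVal2.trace, toC2, CSat2, hTop, hneg]
  all_goals omega

theorem mSat_mbody {lam k : ℕ} {H T : ℕ → Set α} {τ : ℕ → ℕ} (r : MRule α) :
    MSat lam H T τ k r.mbody ↔ r.BodyHolds lam k (H k) (T k) := by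
  cases r <;>
    simp [MRule.mbody, MRule.BodyHolds, MRule.posBody, MRule.negBody, MSat, mneg, mSat_mconj,
      mSat_bToM]

theorem cSat2_toC2_trBody {lam k : ℕ} (hk : k < lam) {h t : CVal2 α} (r : MRule α) :
    CSat2 h t (toC2 (trBody id lam k r)) ↔ r.BodyHolds lam k (h.trace k) (t.trace k) := by
  cases r <;>
    simp [trBody, MRule.BodyHolds, MRule.posBody, MRule.negBody, toC2, CSat2, hneg,
      cSat2_toC2_hconj, cSat2_toC2_trB hk]

theorem mSat_stdHead {lam k : ℕ} {H T : ℕ → Set α} {τ : ℕ → ℕ} (hp hn : List α) :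
    MSat lam H T τ k (mdisj (hp.map MForm.atom ++ hn.map fun a => mneg (MForm.atom a))) ↔
      (∃ a ∈ hp, a ∈ H k) ∨ ∃ a ∈ hn, a ∉ H k ∧ a ∉ T k := by
  simp [mSat_mdisj, MSat, mneg, or_and_right, exists_or]

theorem cSat2_toC2_stdHead {k : ℕ} {h t : CVal2 α} (hp hn : List α) :
    CSat2 h t (toC2 (hdisj (hp.map (fun a => HTForm.atom (id (a, k))) ++
        hn.map fun a => hneg (HTForm.atom (id (a, k)))))) ↔
      (∃ a ∈ hp, a ∈ h.trace k) ∨ ∃ a ∈ hn, a ∉ h.trace k ∧ a ∉ t.trace k := by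
  simp [cSat2_toC2_hdisj, CVal2.trace, toC2, CSat2, hneg, or_and_right, exists_or]

theorem cSat2_toC2_nxtHead {lam k : ℕ} (hk : k < lam) {h t : CVal2 α} (a : α) :
    CSat2 h t (toC2 (if k = lam - 1 then .bot else .atom (id (a, k + 1)))) ↔
      k + 1 < lam ∧ a ∈ h.trace (k + 1) := by
  split_ifs <;> simp [CVal2.trace, toC2, CSat2] <;> omega

theorem mSat_congr_here {lam : ℕ} {H H' T : ℕ → Set α} {τ : ℕ → ℕ}
    (hHH' : ∀ j < lam, H j = H' j) (φ : MForm α) {k : ℕ} (hk : k < lam) :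
    MSat lam H T τ k φ ↔ MSat lam H' T τ k φ := by
  induction φ generalizing k with
  | bot | init => exact Iff.rfl
  | atom a => simp [MSat, hHH' k hk]
  | and φ ψ ihφ ihψ | or φ ψ ihφ ihψ | imp φ ψ ihφ ihψ => simp only [MSat, ihφ hk, ihψ hk]
  | next m n φ ih => simp only [MSat]; exact and_congr_right fun hk1 => and_congr_left' (ih hk1)
  | event m n φ ih =>
    simp only [MSat]
    exact exists_congr fun i => and_congr_right fun _ => and_congr_right fun hi =>
      and_congr_right fun _ => ih hi
  | always m n φ ih =>
    simp only [MSat]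
    exact forall_congr' fun i => imp_congr_right fun _ => imp_congr_right fun hi =>
      imp_congr_right fun _ => ih hi

theorem mHTModelP_congr_here {lam : ℕ} {H H' T : ℕ → Set α} {τ : ℕ → ℕ} {P : Set (MRule α)}
    (hHH' : ∀ j < lam, H j = H' j) : MHTModelP lam H T τ P ↔ MHTModelP lam H' T τ P :=
  forall₂_congr fun r _ => forall₂_congr fun _ hk => mSat_congr_here hHH' r.toMForm hk

theorem exists_timingFn_of_deltaC2 {lam : ℕ} {t : CVal2 α}
    (hDelta : ∀ φ ∈ DeltaC2 (α := α) lam, CSat2 t t φ) :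
    ∃ τ : ℕ → ℕ, TimingFn lam τ ∧ ∀ k < lam, t.2 k = some (τ k) := by
  have h0 : t.2 0 = some 0 := hDelta _ (Or.inl rfl)
  have hstep : ∀ k, k + 1 < lam →
      ∃ x y : ℕ, t.2 k = some x ∧ t.2 (k + 1) = some y ∧ (x : ℤ) - y ≤ -1 :=
    fun k hk => hDelta _ (Or.inr ⟨k, hk, rfl⟩)
  refine ⟨fun k => (t.2 k).getD 0, ?_⟩
  have hτ : ∀ k < lam, t.2 k = some ((t.2 k).getD 0) := by
    rintro (_ | k) hk
    · simp [h0]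
    · obtain ⟨_, y, -, hy, -⟩ := hstep k hk
      simp [hy]
  refine ⟨⟨by simp [h0], fun k hk => ?_⟩, hτ⟩
  obtain ⟨x, y, hx, hy, hxy⟩ := hstep k hk
  simp only [hx, hy, Option.getD_some]
  omega

theorem inI_of_psiC {lam m : ℕ} {n : Option ℕ} {a : α} {bp bn : List (BAtom α)}
    {P : Set (MRule α)} {t : CVal2 α} {τ : ℕ → ℕ} {k : ℕ}
    (hPsi : ∀ φ ∈ PsiC lam P, CSat2 t t φ) (hτ : ∀ j < lam, t.2 j = some (τ j))
    (hr : .nxt m n a bp bn ∈ P) (hk : k + 1 < lam)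
    (hbody : CSat2 t t (toC2 (trBody id lam k (.nxt m n a bp bn)))) :
    inI m n (τ (k + 1) - τ k) := by
  have hτk := hτ k (by omega)
  have hτk1 := hτ (k + 1) hk
  have hlow := (hPsi _ ⟨m, n, a, bp, bn, hr, k, hk, Or.inl rfl⟩).of_denial hbody
  rw [cSat2_diff_iff hτk hτk1] at hlow
  refine ⟨by omega, fun n' hn' => ?_⟩
  have hup := (hPsi _ ⟨m, n, a, bp, bn, hr, k, hk, Or.inr ⟨n', hn', rfl⟩⟩).of_denial hbody
  rw [cSat2_diff_iff hτk1 hτk] at hup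
  omega

theorem mHTModelP_trace_of_cModel2 {lam : ℕ} {P : Set (MRule α)} {t : CVal2 α} {τ : ℕ → ℕ}
    (hPi : ∀ φ ∈ PiC lam P, CSat2 t t φ) (hPsi : ∀ φ ∈ PsiC lam P, CSat2 t t φ)
    (hτ : ∀ k < lam, t.2 k = some (τ k)) : MHTModelP lam t.trace t.trace τ P := by
  intro r hr k hk
  have hrule : CSat2 t t (toC2 (trRule id lam k r)) := hPi _ ⟨_, ⟨r, hr, k, hk, rfl⟩, rfl⟩
  cases r with
  | std hp hn bp bn =>
    refine ⟨fun hb => ?_, fun hb => ?_⟩ <;>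
      exact (mSat_stdHead hp hn).2 ((cSat2_toC2_stdHead hp hn).1
        (hrule.1 ((cSat2_toC2_trBody hk _).2 ((mSat_mbody _).1 hb))))
  | nxt m n a bp bn =>
    refine ⟨fun hb => ?_, fun hb => ?_⟩ <;>
    · have hb' := (cSat2_toC2_trBody hk _).2 ((mSat_mbody _).1 hb)
      obtain ⟨hk1, ha⟩ := (cSat2_toC2_nxtHead hk a).1 (hrule.1 hb')
      exact ⟨hk1, ha, inI_of_psiC hPsi hτ hr hk1 hb'⟩

theorem cSat2_toC2_trRule_of_msat {lam k : ℕ} (hk : k < lam) {h t : CVal2 α} {τ : ℕ → ℕ}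
    (r : MRule α) (hr : MSat lam h.trace t.trace τ k r.toMForm) :
    CSat2 h t (toC2 (trRule id lam k r)) := by
  cases r with
  | std hp hn bp bn =>
    refine ⟨fun hb => ?_, fun hb => ?_⟩
    · exact (cSat2_toC2_stdHead hp hn).2 ((mSat_stdHead hp hn).1
        (hr.1 ((mSat_mbody _).2 ((cSat2_toC2_trBody hk _).1 hb))))
    · exact (cSat2_toC2_stdHead hp hn).2 ((mSat_stdHead hp hn).1
        (hr.2 ((mSat_mbody _).2 ((cSat2_toC2_trBody hk _).1 hb))))
  | nxt m n a bp bn =>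
    refine ⟨fun hb => ?_, fun hb => ?_⟩
    · obtain ⟨hk1, ha, -⟩ := hr.1 ((mSat_mbody _).2 ((cSat2_toC2_trBody hk _).1 hb))
      exact (cSat2_toC2_nxtHead hk a).2 ⟨hk1, ha⟩
    · obtain ⟨hk1, ha, -⟩ := hr.2 ((mSat_mbody _).2 ((cSat2_toC2_trBody hk _).1 hb))
      exact (cSat2_toC2_nxtHead hk a).2 ⟨hk1, ha⟩

def restrictHere (lam : ℕ) (H : ℕ → Set α) (t : CVal2 α) : CVal2 α :=
  ({p | p.2 < lam ∧ p.1 ∈ H p.2}, t.2)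

theorem restrictHere_trace {lam k : ℕ} {H : ℕ → Set α} {t : CVal2 α} (hk : k < lam) :
    (restrictHere lam H t).trace k = H k := by
  ext a
  simp [restrictHere, CVal2.trace, hk]

theorem restrictHere_le {lam : ℕ} {H : ℕ → Set α} {t : CVal2 α} (hH : ∀ k, H k ⊆ t.trace k) :
    CVal2Le (restrictHere lam H t) t :=
  ⟨fun p hp => hH p.2 hp.2, fun _ _ => id⟩

theorem cModel2_restrictHere {lam : ℕ} {P : Set (MRule α)} {t : CVal2 α} {τ : ℕ → ℕ}
    {H : ℕ → Set α} (hmod : CModel2 t t (PiC lam P ∪ DeltaC2 lam ∪ PsiC lam P))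
    (hH : ∀ k, H k ⊆ t.trace k) (hM : MHTModelP lam H t.trace τ P) :
    CModel2 (restrictHere lam H t) t (PiC lam P ∪ DeltaC2 lam ∪ PsiC lam P) := by
  have hM' : MHTModelP lam (restrictHere lam H t).trace t.trace τ P :=
    (mHTModelP_congr_here fun j hj => (restrictHere_trace hj).symm).1 hM
  rintro φ ((⟨_, ⟨r, hr, k, hk, rfl⟩, rfl⟩ | hDelta) | hPsi)
  · exact cSat2_toC2_trRule_of_msat hk r (hM' r hr k hk)
  · have ht := hmod φ (Or.inl (Or.inr hDelta))
    rcases hDelta with rfl | ⟨k, hk, rfl⟩ <;> exact ht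
  · have ht := hmod φ (Or.inr hPsi)
    obtain ⟨m, n, a, bp, bn, hr, k, hk, rfl | ⟨n', hn', rfl⟩⟩ := hPsi <;>
      exact ht.imp_bot_of_le (restrictHere_le hH)

end ConstraintTranslation

/-- Theorem 4 (Correctness of the constraint translation). -/
theorem constraint_translation_correct {α : Type} (lam : ℕ) (P : Set (MRule α))
    (t : CVal2 α)
    (he : CEqModel t (PiC lam P ∪ DeltaC2 lam ∪ PsiC lam P)) :
    ∃ τ : ℕ → ℕ, TimingFn lam τ ∧ (∀ k, k < lam → t.2 k = some (τ k)) ∧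
      MetricEq lam (fun k => {a | (a, k) ∈ t.1}) τ P := by
  obtain ⟨hmod, hmin⟩ := he
  obtain ⟨τ, hτfn, hτ⟩ := exists_timingFn_of_deltaC2 fun φ hφ => hmod φ (Or.inl (Or.inr hφ))
  refine ⟨τ, hτfn, hτ, mHTModelP_trace_of_cModel2 (fun φ hφ => hmod φ (Or.inl (Or.inl hφ)))
    (fun φ hφ => hmod φ (Or.inr hφ)) hτ, fun H hH hM k hk => ?_⟩
  have heq := hmin _ (restrictHere_le hH) (cModel2_restrictHere hmod hH hM)
  calc H k = (restrictHere lam H t).trace k := (restrictHere_trace hk).symm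
    _ = t.trace k := by rw [heq]
end

section
/- In HT_c, shifting a constraint atom from the negated body to the head preserves models on interpretations where all variables of the constraint are defined: if ⟨h,t⟩ is an HT_c-interpretation such that h(x) and h(y) are defined in ℕ (hence t(x), t(y) as well), then ⟨h,t⟩ ⊨ (⊥ ← B ∧ ¬c) if and only if ⟨h,t⟩ ⊨ (c ← B), where c is the difference constraint x − y ≤ d and B is any constraint formula. -/
namespace CSat

variable {V : Type}

theorem diff_iff_of_eq_some {v w : CVal V} {x y : V} {a b : ℕ} (d : ℤ)
    (hx : v x = some a) (hy : v y = some b) :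
    CSat v w (.diff x y d) ↔ (a : ℤ) - b ≤ d := by
  simp [CSat, hx, hy]

theorem diff_iff_of_le {h t : CVal V} (hle : CValLe h t) {x y : V} {a b : ℕ} (d : ℤ)
    (hx : h x = some a) (hy : h y = some b) :
    CSat h t (.diff x y d) ↔ CSat t t (.diff x y d) := by
  rw [diff_iff_of_eq_some d hx hy, diff_iff_of_eq_some d (hle x a hx) (hle y b hy)]

theorem imp_and_neg_bot_iff_imp {h t : CVal V} (B c : CForm V)
    (hc : CSat h t c ↔ CSat t t c) :
    CSat h t (.imp (.and B (.imp c .bot)) .bot) ↔ CSat h t (.imp B c) := by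
  simp only [CSat, hc]
  tauto

end CSat

/-- Shifting a difference constraint from negated body to head preserves HT_c
satisfaction when its variables are defined. -/
theorem shift_constraint {V : Type} (h t : CVal V) (hle : CValLe h t)
    (x y : V) (d : ℤ) (a b : ℕ) (hx : h x = some a) (hy : h y = some b)
    (B : CForm V) :
    CSat h t (.imp (.and B (.imp (.diff x y d) .bot)) .bot) ↔
      CSat h t (.imp B (.diff x y d)) :=
  CSat.imp_and_neg_bot_iff_imp B _ (CSat.diff_iff_of_le hle d hx hy)
end

section
/- The size of the Boolean timing theory Δ_{λ,ν} ∪ Ψ_{λ,ν}(P), measured as the number of rules, is at most |P|·λ·(ν+1)² + λ·(ν+1) + 1 (i.e., O(λ·ν²) for fixed P), while the constraint theory Δ^c_λ ∪ Ψ^c_λ(P) has at most 2·|P|·λ + λ rules (i.e., O(λ) for fixed P). -/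
/-! Each piece of the two theories is, by its definition, the image of an explicit finite index
set (the initial fact; steps `k < λ - 1` together with times `d, d' ≤ ν` or a rule of `P`; and
for `Ψ^c` the choice of the lower or the upper bound of the interval), so its cardinality is at
most that of the index set. -/

open Finset

theorem Set.ncard_le_card_of_subset_image {γ δ : Type*} {s : Set δ} {A : Finset γ}
    {F : γ → δ} (h : s ⊆ F '' A) : s.ncard ≤ A.card :=
  calc s.ncard ≤ (F '' A).ncard := Set.ncard_le_ncard h (A.finite_toSet.image F)
    _ ≤ (A : Set γ).ncard := Set.ncard_image_le A.finite_toSet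
    _ = A.card := Set.ncard_coe_finset A

section

variable {α : Type} (lam : ℕ)

theorem ncard_deltaB_le {β : Type} (f : ℕ × ℕ → β) (ν : ℕ) :
    (DeltaB f lam ν).ncard ≤ (lam - 1) * (ν + 1) + 1 := by
  refine (Set.ncard_union_le _ _).trans ?_
  rw [Set.ncard_singleton, add_comm]
  gcongr
  calc _ ≤ (range (lam - 1) ×ˢ range (ν + 1)).card :=
        Set.ncard_le_card_of_subset_image (F := fun p => deltaRule f p.1 p.2 ν) <| by
          rintro _ ⟨k, d, hk, hd, rfl⟩
          exact ⟨(k, d), by simp only [coe_product, coe_range, Set.mem_prod, Set.mem_Iio]; omega,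
            rfl⟩
    _ = _ := by simp

theorem ncard_deltaC2_le : (DeltaC2 (α := α) lam).ncard ≤ (lam - 1) + 1 := by
  refine (Set.ncard_union_le _ _).trans ?_
  rw [Set.ncard_singleton, add_comm]
  gcongr
  calc _ ≤ (range (lam - 1)).card :=
        Set.ncard_le_card_of_subset_image (F := fun k => CForm2.diff k (k + 1) (-1)) <| by
          rintro _ ⟨k, hk, rfl⟩
          exact ⟨k, by simp only [coe_range, Set.mem_Iio]; omega, rfl⟩
    _ = _ := card_range _

def psiBConstraint (k d d' : ℕ) (r : MRule α) : HTForm (TAtom α) :=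
  .imp (.and (trBody Sum.inl lam k r)
    (.and (.atom (Sum.inr (k, d))) (.atom (Sum.inr (k + 1, d'))))) .bot

/-- Rules that are not of the form `□(○_[m,n) a ← β)`, or have `n = ω`, are sent to `⊥`;
they are never indexed. -/
def psiCLower (k : ℕ) : MRule α → CForm2 α
  | r@(.nxt m ..) =>
      .imp (.and (toC2 (trBody id lam k r)) (cneg (.diff k (k + 1) (-(m : ℤ))))) .bot
  | .std .. => .bot

def psiCUpper (k : ℕ) : MRule α → CForm2 α
  | r@(.nxt _ (some n) ..) =>
      .imp (.and (toC2 (trBody id lam k r)) (cneg (.diff (k + 1) k ((n : ℤ) - 1)))) .bot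
  | _ => .bot

theorem ncard_psiB_le (ν : ℕ) (P : Finset (MRule α)) :
    (PsiB lam ν (P : Set (MRule α))).ncard ≤ P.card * (lam - 1) * (ν + 1) ^ 2 := by
  calc _ ≤ (P ×ˢ range (lam - 1) ×ˢ range (ν + 1) ×ˢ range (ν + 1)).card :=
        Set.ncard_le_card_of_subset_image
          (F := fun q => psiBConstraint lam q.2.1 q.2.2.1 q.2.2.2 q.1) <| by
          rintro _ ⟨m, n, a, bp, bn, hr, k, d, d', hk, hdd', hd', rfl, -⟩
          refine ⟨(.nxt m n a bp bn, k, d, d'), ?_, rfl⟩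
          simp only [coe_product, coe_range, Set.mem_prod, Set.mem_Iio, mem_coe]
          exact ⟨hr, by omega, by omega, by omega⟩
    _ = _ := by simp only [card_product, card_range]; ring

theorem ncard_psiC_le (P : Finset (MRule α)) :
    (PsiC lam (P : Set (MRule α))).ncard ≤ 2 * P.card * (lam - 1) := by
  have hsub : PsiC lam (P : Set (MRule α)) ⊆
      (fun q : MRule α × ℕ => psiCLower lam q.2 q.1) '' ↑(P ×ˢ range (lam - 1)) ∪
      (fun q : MRule α × ℕ => psiCUpper lam q.2 q.1) '' ↑(P ×ˢ range (lam - 1)) := by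
    rintro _ ⟨m, n, a, bp, bn, hr, k, hk, rfl | ⟨n, rfl, rfl⟩⟩
    · exact .inl ⟨(.nxt m n a bp bn, k), by simpa using ⟨hr, by omega⟩, rfl⟩
    · exact .inr ⟨(.nxt m (some n) a bp bn, k), by simpa using ⟨hr, by omega⟩, rfl⟩
  calc _ ≤ _ := Set.ncard_le_ncard hsub (Set.toFinite _)
    _ ≤ _ := Set.ncard_union_le _ _
    _ ≤ (P ×ˢ range (lam - 1)).card + (P ×ˢ range (lam - 1)).card :=
        add_le_add (Set.ncard_le_card_of_subset_image subset_rfl)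
          (Set.ncard_le_card_of_subset_image subset_rfl)
    _ = _ := by simp only [card_product, card_range]; ring

end

/-- Size bounds: the Boolean timing theory has `O(λ·ν²)` rules while the constraint
theory has `O(λ)` rules. -/
theorem theory_size_bounds {α : Type} (lam ν : ℕ) (hlam : 1 ≤ lam)
    (P : Finset (MRule α)) :
    (DeltaB (β := TAtom α) Sum.inr lam ν ∪ PsiB lam ν (↑P : Set (MRule α))).ncard ≤
        P.card * lam * (ν + 1) ^ 2 + lam * (ν + 1) + 1 ∧
    (DeltaC2 (α := α) lam ∪ PsiC lam (↑P : Set (MRule α))).ncard ≤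
        2 * P.card * lam + lam := by
  have hlam' : lam - 1 ≤ lam := Nat.sub_le lam 1
  constructor
  · calc _ ≤ _ := Set.ncard_union_le _ _
      _ ≤ ((lam - 1) * (ν + 1) + 1) + P.card * (lam - 1) * (ν + 1) ^ 2 :=
          add_le_add (ncard_deltaB_le lam _ ν) (ncard_psiB_le lam ν P)
      _ ≤ _ := by rw [add_comm, ← add_assoc]; gcongr
  · calc _ ≤ _ := Set.ncard_union_le _ _
      _ ≤ ((lam - 1) + 1) + 2 * P.card * (lam - 1) :=
          add_le_add (ncard_deltaC2_le lam) (ncard_psiC_le lam P)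
      _ ≤ _ := by rw [Nat.sub_add_cancel hlam, add_comm]; gcongr
end
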